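/- Let u¹ be the feedforward law (|u¹_k| = |f_k(x)|, φ_{u¹_k} = φ_{x_k} + (π/2)(1 + sign f_k(x))) and u² the SMC law (|u²_k| = α|sign(|x_k| − 1)|, φ_{u²_k} = φ_{x_k} + (π/2)(1 + sign(|x_k| − 1))) with α > 0. Then along solutions of ẋ_k = iω_k x_k + σ∑_j a_{kj}x_j + u¹_k + u²_k (with x_k ≠ 0), the moduli satisfy d/dt |x_k| = −α sign(|x_k| − 1), and the control contributes zero to d/dt arg x_k, i.e., d/dt arg x_k = ω_k + σ∑_j a_{kj}(|x_j|/|x_k|) sin(arg x_j − arg x_k). -/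

import Mathlib

/-!
Write `x_k = |x_k| e^{iφ_k}`. Multiplying the velocity `ẋ_k` by `e^{-iφ_k}` gives a complex number
whose real part is `d|x_k|/dt` and whose imaginary part is `|x_k| φ_k'`. After this rotation the
coupling term becomes `f_k + iσ ∑ a_{kj} |x_j| sin(φ_j - φ_k)`, while a control of modulus `|r|`
and phase `φ_k + (π/2)(1 + sign r)` becomes the real number `-r`: the feedforward law thus
cancels `f_k`, the sliding-mode law contributes `-α sign(|x_k| - 1)`, and neither touches the
imaginary part.
-/

open Complex
open scoped Real

lemma Real.sign_sign (r : ℝ) : Real.sign (Real.sign r) = Real.sign r := by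
  rcases Real.sign_apply_eq r with h | h | h <;> rw [h] <;> simp [Real.sign_of_neg, Real.sign_of_pos]

lemma ofReal_abs_mul_exp_sign_phase (r : ℝ) :
    ((|r| : ℝ) : ℂ) * cexp (I * ((π / 2 * (1 + Real.sign r) : ℝ) : ℂ)) = -r := by
  rcases lt_trichotomy r 0 with h | rfl | h
  · simp [Real.sign_of_neg h, abs_of_neg h]
  · simp
  · rw [Real.sign_of_pos h, abs_of_pos h]
    norm_num [mul_comm I, exp_pi_mul_I]

lemma exp_phase_add_mul_exp_neg (θ ψ : ℝ) :
    cexp (I * ((θ + ψ : ℝ) : ℂ)) * cexp (-(I * (θ : ℂ))) = cexp (I * (ψ : ℂ)) := by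
  rw [← exp_add]; push_cast; ring_nf

lemma mul_exp_neg_eq_norm_of_polar {z : ℂ} {θ : ℝ} (h : z = ‖z‖ * cexp (I * (θ : ℂ))) :
    z * cexp (-(I * (θ : ℂ))) = ‖z‖ := by
  conv_lhs => rw [h]
  rw [mul_assoc, ← exp_add, add_neg_cancel, exp_zero, mul_one]

lemma HasDerivAt.re_and_im_eq_zero_of_ofReal_comp {r : ℝ → ℝ} {G : ℂ} {t : ℝ}
    (h : HasDerivAt (fun s => (r s : ℂ)) G t) : HasDerivAt r G.re t ∧ G.im = 0 := by
  have hre := reCLM.hasFDerivAt.comp_hasDerivAt t h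
  have him := imCLM.hasFDerivAt.comp_hasDerivAt t h
  simp only [Function.comp_def, reCLM_apply, imCLM_apply, ofReal_re, ofReal_im] at hre him
  exact ⟨hre, him.unique (hasDerivAt_const t 0)⟩

lemma HasDerivAt.norm_and_phase_of_polar {x : ℝ → ℂ} {φ : ℝ → ℝ} {D : ℂ} {φ' t : ℝ}
    (hx : HasDerivAt x D t) (hφ : HasDerivAt φ φ' t)
    (hpolar : ∀ s, x s = ‖x s‖ * cexp (I * (φ s : ℂ))) :
    HasDerivAt (fun s => ‖x s‖) (D * cexp (-(I * (φ t : ℂ)))).re t ∧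
      ‖x t‖ * φ' = (D * cexp (-(I * (φ t : ℂ)))).im := by
  have hunwind s := mul_exp_neg_eq_norm_of_polar (hpolar s)
  have hderiv : HasDerivAt (fun s => x s * cexp (-(I * (φ s : ℂ))))
      (D * cexp (-(I * (φ t : ℂ))) - I * (‖x t‖ * φ' : ℝ)) t := by
    refine (hx.mul (hφ.ofReal_comp.const_mul I).neg.cexp).congr_deriv ?_
    push_cast
    rw [Pi.neg_apply, ← hunwind t]
    ring
  rw [funext hunwind] at hderiv
  obtain ⟨hre, him⟩ := hderiv.re_and_im_eq_zero_of_ofReal_comp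
  simp only [sub_re, sub_im, I_mul_re, I_mul_im, ofReal_re, ofReal_im, neg_zero, sub_zero] at hre him
  exact ⟨hre, by linarith⟩

lemma feedforward_mul_exp_neg (θ f : ℝ) :
    ((|f| : ℝ) : ℂ) * cexp (I * ((θ + π / 2 * (1 + Real.sign f) : ℝ) : ℂ)) *
      cexp (-(I * (θ : ℂ))) = -f := by
  rw [mul_assoc, exp_phase_add_mul_exp_neg, ofReal_abs_mul_exp_sign_phase]

lemma slidingMode_mul_exp_neg (θ α s : ℝ) :
    ((α * |Real.sign s| : ℝ) : ℂ) * cexp (I * ((θ + π / 2 * (1 + Real.sign s) : ℝ) : ℂ)) *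
      cexp (-(I * (θ : ℂ))) = ((-(α * Real.sign s) : ℝ) : ℂ) := by
  have h := ofReal_abs_mul_exp_sign_phase (Real.sign s)
  rw [Real.sign_sign] at h
  rw [mul_assoc, exp_phase_add_mul_exp_neg, ofReal_mul, mul_assoc, h]
  push_cast; ring

lemma sum_mul_polar_mul_exp_neg {ι : Type*} [Fintype ι] (a : ι → ℝ) (x : ι → ℂ) (θ : ι → ℝ) (ψ : ℝ)
    (hpolar : ∀ j, x j = ‖x j‖ * cexp (I * (θ j : ℂ))) :
    (∑ j, (a j : ℂ) * x j) * cexp (-(I * (ψ : ℂ)))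
      = ((∑ j, a j * ‖x j‖ * Real.cos (θ j - ψ) : ℝ) : ℂ)
        + I * ((∑ j, a j * ‖x j‖ * Real.sin (θ j - ψ) : ℝ) : ℂ) := by
  have hterm : ∀ j, (a j : ℂ) * x j * cexp (-(I * (ψ : ℂ)))
      = (a j * ‖x j‖ * Real.cos (θ j - ψ) : ℝ) + I * (a j * ‖x j‖ * Real.sin (θ j - ψ) : ℝ) := by
    intro j
    conv_lhs => rw [hpolar j]
    rw [mul_assoc, mul_assoc, ← exp_add,
      show I * (θ j : ℂ) + -(I * ψ) = ((θ j - ψ : ℝ) : ℂ) * I by push_cast; ring, exp_mul_I,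
      ← ofReal_cos, ← ofReal_sin]
    push_cast; ring
  rw [Finset.sum_mul, Finset.sum_congr rfl fun j _ => hterm j, Finset.sum_add_distrib,
    ← Finset.mul_sum]
  push_cast; rfl

lemma closedLoop_mul_exp_neg {ι : Type*} [Fintype ι] (ω σ α : ℝ) (a : ι → ℝ) (x : ι → ℂ)
    (θ : ι → ℝ) (k : ι) (hpolar : ∀ j, x j = ‖x j‖ * cexp (I * (θ j : ℂ))) (f : ℝ)
    (hf : f = σ * ∑ j, a j * ‖x j‖ * Real.cos (θ j - θ k)) (u₁ u₂ : ℂ)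
    (hu₁ : u₁ = ((|f| : ℝ) : ℂ) * cexp (I * ((θ k + π / 2 * (1 + Real.sign f) : ℝ) : ℂ)))
    (hu₂ : u₂ = ((α * |Real.sign (‖x k‖ - 1)| : ℝ) : ℂ) *
      cexp (I * ((θ k + π / 2 * (1 + Real.sign (‖x k‖ - 1)) : ℝ) : ℂ))) :
    (I * ω * x k + σ * ∑ j, (a j : ℂ) * x j + u₁ + u₂) * cexp (-(I * (θ k : ℂ)))
      = ((-α * Real.sign (‖x k‖ - 1) : ℝ) : ℂ)
        + I * ((ω * ‖x k‖ + σ * ∑ j, a j * ‖x j‖ * Real.sin (θ j - θ k) : ℝ) : ℂ) := by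
  have hrotate := mul_exp_neg_eq_norm_of_polar (hpolar k)
  have hcoupling := sum_mul_polar_mul_exp_neg a x θ (θ k) hpolar
  have hfeedforward := feedforward_mul_exp_neg (θ k) f
  have hsmc := slidingMode_mul_exp_neg (θ k) α (‖x k‖ - 1)
  rw [← hu₁, hf] at hfeedforward
  rw [← hu₂] at hsmc
  push_cast at hcoupling hfeedforward hsmc ⊢
  linear_combination I * ω * hrotate + σ * hcoupling + hfeedforward + hsmc

theorem stmt19_general (N : ℕ) (ω : Fin N → ℝ) (σ α : ℝ)
    (a : Fin N → Fin N → ℝ)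
    (x : ℝ → Fin N → ℂ) (φ : ℝ → Fin N → ℝ)
    (hne : ∀ t k, x t k ≠ 0)
    (hpolar : ∀ t k, x t k = (‖x t k‖ : ℂ) * Complex.exp (Complex.I * (φ t k : ℂ)))
    (hφ : ∀ k t, DifferentiableAt ℝ (fun s => φ s k) t)
    (f : ℝ → Fin N → ℝ)
    (hf : ∀ t k, f t k = σ * ∑ j, a k j * ‖x t j‖ * Real.cos (φ t j - φ t k))
    (u₁ u₂ : ℝ → Fin N → ℂ)
    (hu₁ : ∀ t k, u₁ t k = ((|f t k| : ℝ) : ℂ) *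
      Complex.exp (Complex.I * ((φ t k + Real.pi / 2 * (1 + Real.sign (f t k)) : ℝ) : ℂ)))
    (hu₂ : ∀ t k, u₂ t k = ((α * |Real.sign (‖x t k‖ - 1)| : ℝ) : ℂ) *
      Complex.exp (Complex.I *
        ((φ t k + Real.pi / 2 * (1 + Real.sign (‖x t k‖ - 1)) : ℝ) : ℂ)))
    (hdyn : ∀ k t, HasDerivAt (fun s => x s k)
      (Complex.I * (ω k : ℂ) * x t k + (σ : ℂ) * ∑ j, (a k j : ℂ) * x t j
        + u₁ t k + u₂ t k) t) :
    (∀ k t, HasDerivAt (fun s => ‖x s k‖)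
        (-α * Real.sign (‖x t k‖ - 1)) t) ∧
    (∀ k t, deriv (fun s => φ s k) t
        = ω k + σ * ∑ j, a k j * (‖x t j‖ / ‖x t k‖) *
            Real.sin (φ t j - φ t k)) := by
  have hpolarDeriv := fun k t =>
    (hdyn k t).norm_and_phase_of_polar (hφ k t).hasDerivAt (fun s => hpolar s k)
  have hrotated := fun k t => closedLoop_mul_exp_neg (ω k) σ α (a k) (x t) (φ t) k
    (hpolar t) (f t k) (hf t k) (u₁ t k) (u₂ t k) (hu₁ t k) (hu₂ t k)
  refine ⟨fun k t => ?_, fun k t => ?_⟩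
  · simpa only [hrotated k t, add_re, ofReal_re, I_mul_re, ofReal_im, neg_zero, add_zero]
      using (hpolarDeriv k t).1
  · have hmod := (hpolarDeriv k t).2
    simp only [hrotated k t, add_im, ofReal_im, I_mul_im, ofReal_re, zero_add] at hmod
    have hr : ‖x t k‖ ≠ 0 := norm_ne_zero_iff.mpr (hne t k)
    apply mul_left_cancel₀ hr
    rw [hmod, mul_add, mul_comm (ω k), Finset.mul_sum, Finset.mul_sum, Finset.mul_sum]
    congr 1
    exact Finset.sum_congr rfl fun j _ => by field_simp

/-- Closed-loop decomposition of Theorem 2 (feedforward + SMC): under the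
combined control `u¹ + u²`, the moduli satisfy
`d/dt |x_k| = −α sign(|x_k| − 1)` and the controls contribute nothing to
the arguments, which satisfy
`d/dt arg x_k = ω_k + σ ∑_j a_{kj}(|x_j|/|x_k|) sin(arg x_j − arg x_k)`. -/
theorem stmt19 (N : ℕ) (ω : Fin N → ℝ) (σ α : ℝ) (hσ : 0 < σ) (hα : 0 < α)
    (a : Fin N → Fin N → ℝ)
    (hA : ∀ k j, a k j = 0 ∨ a k j = 1) (hdiag : ∀ k, a k k = 0)
    (x : ℝ → Fin N → ℂ) (φ : ℝ → Fin N → ℝ)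
    (hne : ∀ t k, x t k ≠ 0)
    (hpolar : ∀ t k, x t k = (‖x t k‖ : ℂ) * Complex.exp (Complex.I * (φ t k : ℂ)))
    (hφ : ∀ k t, DifferentiableAt ℝ (fun s => φ s k) t)
    (f : ℝ → Fin N → ℝ)
    (hf : ∀ t k, f t k = σ * ∑ j, a k j * ‖x t j‖ * Real.cos (φ t j - φ t k))
    (u₁ u₂ : ℝ → Fin N → ℂ)
    (hu₁ : ∀ t k, u₁ t k = ((|f t k| : ℝ) : ℂ) *
      Complex.exp (Complex.I * ((φ t k + Real.pi / 2 * (1 + Real.sign (f t k)) : ℝ) : ℂ)))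
    (hu₂ : ∀ t k, u₂ t k = ((α * |Real.sign (‖x t k‖ - 1)| : ℝ) : ℂ) *
      Complex.exp (Complex.I *
        ((φ t k + Real.pi / 2 * (1 + Real.sign (‖x t k‖ - 1)) : ℝ) : ℂ)))
    (hdyn : ∀ k t, HasDerivAt (fun s => x s k)
      (Complex.I * (ω k : ℂ) * x t k + (σ : ℂ) * ∑ j, (a k j : ℂ) * x t j
        + u₁ t k + u₂ t k) t) :
    (∀ k t, HasDerivAt (fun s => ‖x s k‖)
        (-α * Real.sign (‖x t k‖ - 1)) t) ∧
    (∀ k t, deriv (fun s => φ s k) t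
        = ω k + σ * ∑ j, a k j * (‖x t j‖ / ‖x t k‖) *
            Real.sin (φ t j - φ t k)) :=
  stmt19_general N ω σ α a x φ hne hpolar hφ f hf u₁ u₂ hu₁ hu₂ hdyn
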